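/- arXiv:1512.07851 — 2 statements merged into one kernel-verified Lean document; each statement's English description precedes it below -/
import Mathlib

section
/- Single-step passive-aggressive update solves the proximal problem: let θ₀ ∈ ℝ^d, Δφ ∈ ℝ^d with Δφ ≠ 0, λ > 0, define the loss g(θ) = max(0, 1 - θ·Δφ), and let τ = min(1/λ, g(θ₀)/‖Δφ‖²). If g(θ₀)/‖Δφ‖² ≤ 1/λ, then θ₀ + τ·Δφ minimizes θ ↦ g(θ) + (λ/2)‖θ - θ₀‖². -/
theorem pa_update_minimizes {d : ℕ} (θ₀ Δφ : EuclideanSpace ℝ (Fin d)) (hΔ : Δφ ≠ 0)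
    (lam : ℝ) (hlam : 0 < lam)
    (g : EuclideanSpace ℝ (Fin d) → ℝ)
    (hg : ∀ θ, g θ = max 0 (1 - (inner ℝ θ Δφ : ℝ)))
    (τ : ℝ) (hτ : τ = g θ₀ / ‖Δφ‖ ^ 2)
    (hcase : g θ₀ / ‖Δφ‖ ^ 2 ≤ 1 / lam) :
    ∀ θ : EuclideanSpace ℝ (Fin d),
      g (θ₀ + τ • Δφ) + lam / 2 * ‖(θ₀ + τ • Δφ) - θ₀‖ ^ 2 ≤
        g θ + lam / 2 * ‖θ - θ₀‖ ^ 2 := by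
  intro θ
  have hn : (0:ℝ) < ‖Δφ‖ := norm_pos_iff.mpr hΔ
  have hn2 : (0:ℝ) < ‖Δφ‖ ^ 2 := by positivity
  set a : ℝ := inner ℝ θ₀ Δφ with ha
  have hg0 : g θ₀ = max 0 (1 - a) := hg θ₀
  have hg0nn : 0 ≤ g θ₀ := by rw [hg0]; exact le_max_left _ _
  have hτ0 : 0 ≤ τ := by rw [hτ]; positivity
  have hip : (inner ℝ (θ₀ + τ • Δφ) Δφ : ℝ) = a + τ * ‖Δφ‖ ^ 2 := by
    rw [inner_add_left, real_inner_smul_left, real_inner_self_eq_norm_sq]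
  have hns : ‖(θ₀ + τ • Δφ) - θ₀‖ = τ * ‖Δφ‖ := by
    rw [add_sub_cancel_left, norm_smul, Real.norm_eq_abs, abs_of_nonneg hτ0]
  set v := θ - θ₀ with hv
  have hθ : θ = θ₀ + v := by rw [hv]; abel
  have hipθ : (inner ℝ θ Δφ : ℝ) = a + inner ℝ v Δφ := by
    rw [hθ, inner_add_left]
  have hgθ : (0:ℝ) ≤ g θ := by rw [hg]; exact le_max_left _ _
  have hgθ' : 1 - (a + inner ℝ v Δφ) ≤ g θ := by
    rw [hg θ, hipθ]; exact le_max_right _ _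
  have hcs : (inner ℝ v Δφ : ℝ) ≤ ‖v‖ * ‖Δφ‖ := real_inner_le_norm v Δφ
  rcases le_or_gt (1 - a) 0 with hcase0 | hcase1
  · -- g θ₀ = 0, τ = 0
    have hgz : g θ₀ = 0 := by rw [hg0]; exact max_eq_left hcase0
    have hτz : τ = 0 := by rw [hτ, hgz]; simp
    have : g (θ₀ + τ • Δφ) = 0 := by
      rw [hg, hip, hτz]
      simp only [zero_mul, add_zero]
      exact max_eq_left hcase0
    rw [this, hns, hτz]
    have : (0:ℝ) ≤ lam / 2 * ‖v‖ ^ 2 := by positivity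
    nlinarith
  · -- g θ₀ = 1 - a > 0
    have hgz : g θ₀ = 1 - a := by rw [hg0]; exact max_eq_right hcase1.le
    have hτe : τ * ‖Δφ‖ ^ 2 = 1 - a := by
      rw [hτ, hgz]; field_simp
    have hgstar : g (θ₀ + τ • Δφ) = 0 := by
      rw [hg, hip, hτe]
      norm_num
    have hlτ : lam * τ ≤ 1 := by
      rw [hτ]
      rw [div_le_div_iff₀ hn2 hlam] at hcase
      calc lam * (g θ₀ / ‖Δφ‖ ^ 2) = g θ₀ * lam / ‖Δφ‖ ^ 2 := by ring
        _ ≤ 1 := by rw [div_le_one hn2]; linarith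
    have h1 : lam * τ * (1 - a - inner ℝ v Δφ) ≤ g θ := by
      rcases le_or_gt (1 - a - inner ℝ v Δφ) 0 with h | h
      · have : lam * τ * (1 - a - inner ℝ v Δφ) ≤ 0 :=
          mul_nonpos_of_nonneg_of_nonpos (by positivity) h
        linarith
      · nlinarith
    rw [hgstar, hns]
    nlinarith [sq_nonneg (‖v‖ - τ * ‖Δφ‖), mul_nonneg (mul_nonneg hlam.le hτ0) hn.le,
      mul_le_mul_of_nonneg_left hcs (mul_nonneg hlam.le hτ0), norm_nonneg v]
end

section
/- Mistake lower bound for τ·ℓ: let λ ∈ (0,1], Δφ ∈ ℝ^d with 0 < ‖Δφ‖² ≤ 1, θ ∈ ℝ^d with θ·Δφ ≤ 0, ℓ = max(0, 1 - θ·Δφ), and τ = min(1/λ, ℓ/‖Δφ‖²). Then τ·ℓ ≥ 1. -/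
theorem tau_mul_loss_ge_one_of_mistake {d : ℕ}
    (lam : ℝ) (hlam0 : 0 < lam) (hlam1 : lam ≤ 1)
    (Δφ θ : EuclideanSpace ℝ (Fin d))
    (hΔ0 : 0 < ‖Δφ‖ ^ 2) (hΔ1 : ‖Δφ‖ ^ 2 ≤ 1)
    (hmistake : (inner ℝ θ Δφ : ℝ) ≤ 0)
    (ℓ τ : ℝ)
    (hℓ : ℓ = max 0 (1 - (inner ℝ θ Δφ : ℝ)))
    (hτ : τ = min (1 / lam) (ℓ / ‖Δφ‖ ^ 2)) :
    1 ≤ τ * ℓ := by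
  have hℓ1 : 1 ≤ ℓ := hℓ ▸ le_max_of_le_right (by linarith)
  have hτ1 : 1 ≤ τ :=
    hτ ▸ le_min (one_le_one_div hlam0 hlam1) ((one_le_div hΔ0).2 (hΔ1.trans hℓ1))
  exact one_le_mul_of_one_le_of_one_le hτ1 hℓ1
end
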